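/- (Transfer Formula.) Let a < b be reals, α ∈ (0,1), and let f, g : [a,b] → ℝ be infinitely differentiable. Assume condition (C): the sequences of functions (t ↦ g^{(k)}(t)·(J_{a+}^{k−α}(f − f(a)))(t))_{k≥1} and (t ↦ f^{(k)}(t)·(J_{b-}^{k−α} g)(t))_{k≥1} converge uniformly to 0 on [a,b], and assume the series below converges to a differentiable function of t on (a,b). Then for every t ∈ (a,b): g(t)·(ᶜD_{a+}^α f)(t) − f(t)·(D_{b-}^α g)(t) = (d/dt)[ Σ_{r=0}^{∞} ( (−1)^r g^{(r)}(t)·(J_{a+}^{r+1−α}(f − f(a)))(t) + f^{(r)}(t)·(J_{b-}^{r+1−α} g)(t) ) ]. -/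

import Mathlib

open MeasureTheory Set Filter intervalIntegral Topology

/- Riemann–Liouville fractional integrals and derivatives, and Caputo derivatives. -/

/-- Left Riemann–Liouville fractional integral of order `β` with lower limit `a`. -/
noncomputable def RLintLeft (a β : ℝ) (x : ℝ → ℝ) (t : ℝ) : ℝ :=
  (1 / Real.Gamma β) * ∫ u in a..t, (t - u) ^ (β - 1) * x u

/-- Right Riemann–Liouville fractional integral of order `β` with upper limit `b`. -/
noncomputable def RLintRight (b β : ℝ) (x : ℝ → ℝ) (t : ℝ) : ℝ :=
  (1 / Real.Gamma β) * ∫ u in t..b, (u - t) ^ (β - 1) * x u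

/-- Left Riemann–Liouville fractional derivative of order `α` with lower limit `a`. -/
noncomputable def RLderivLeft (a α : ℝ) (x : ℝ → ℝ) (t : ℝ) : ℝ :=
  deriv (RLintLeft a (1 - α) x) t

/-- Right Riemann–Liouville fractional derivative of order `α` with upper limit `b`. -/
noncomputable def RLderivRight (b α : ℝ) (x : ℝ → ℝ) (t : ℝ) : ℝ :=
  - deriv (RLintRight b (1 - α) x) t

/-- Left Caputo fractional derivative of order `α` with lower limit `a`. -/
noncomputable def caputoLeft (a α : ℝ) (x : ℝ → ℝ) (t : ℝ) : ℝ :=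
  RLderivLeft a α (fun u => x u - x a) t

/-- Right Caputo fractional derivative of order `α` with upper limit `b`. -/
noncomputable def caputoRight (b α : ℝ) (x : ℝ → ℝ) (t : ℝ) : ℝ :=
  RLderivRight b α (fun u => x b - x u) t


namespace TF

lemma int_rpow {β : ℝ} (hβ : 0 < β) (c : ℝ) : ∫ v in (0:ℝ)..c, v ^ (β - 1) = c ^ β / β := by
  rw [integral_rpow (Or.inl (by linarith))]
  have h1 : β - 1 + 1 = β := by ring
  rw [h1, Real.zero_rpow hβ.ne']
  ring

lemma L2core {β : ℝ} (hβ : 0 < β) {y : ℝ → ℝ} (hy : Continuous y) (c : ℝ) :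
    IntervalIntegrable (fun s => s ^ (β - 1) * y s) volume 0 c :=
  (intervalIntegral.intervalIntegrable_rpow' (by linarith)).mul_continuousOn hy.continuousOn

lemma II_left {β : ℝ} (hβ : 0 < β) {x : ℝ → ℝ} (hx : Continuous x) (a T : ℝ) :
    IntervalIntegrable (fun u => (T - u) ^ (β - 1) * x u) volume a T := by
  have h := (L2core hβ (y := fun s => x (T - s))
    (hx.comp (continuous_const.sub continuous_id)) (T - a)).comp_sub_left T
  simpa [sub_sub_cancel] using h.symm

lemma II_right {β : ℝ} (hβ : 0 < β) {x : ℝ → ℝ} (hx : Continuous x) (T b : ℝ) :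
    IntervalIntegrable (fun u => (u - T) ^ (β - 1) * x u) volume T b := by
  have h := (L2core hβ (y := fun s => x (s + T))
    (hx.comp (continuous_id.add continuous_const)) (b - T)).comp_sub_right T
  simpa [sub_add_cancel] using h

lemma subst_left (β : ℝ) (x : ℝ → ℝ) (a t : ℝ) :
    ∫ u in a..t, (t - u) ^ (β - 1) * x u = ∫ s in (0:ℝ)..(t - a), s ^ (β - 1) * x (t - s) := by
  have h := intervalIntegral.integral_comp_sub_left (a := a) (b := t)
    (fun s => s ^ (β - 1) * x (t - s)) t
  simpa [sub_sub_cancel, sub_self] using h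

end TF

namespace TF

lemma contOn_left {β : ℝ} (hβ : 0 < β) {x : ℝ → ℝ} (hx : Continuous x) (a : ℝ) :
    ContinuousOn (fun t => ∫ u in a..t, (t - u) ^ (β - 1) * x u) (Ici a) := by
  intro t0 ht0
  have ht0' : a ≤ t0 := ht0
  set S : Set ℝ := Icc a (t0 + 1) with hS
  obtain ⟨M, hM⟩ := (isCompact_Icc (a := a) (b := t0 + 1)).exists_bound_of_continuousOn
      hx.continuousOn
  set M' : ℝ := max M 0 with hM'
  have hM'0 : 0 ≤ M' := le_max_right _ _
  have hMx : ∀ y ∈ S, |x y| ≤ M' := fun y hy => (hM y hy).trans (le_max_left _ _)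
  set k : ℝ → ℝ → ℝ :=
    fun t s => (Ioc (0:ℝ) (t - a)).indicator (fun s => s ^ (β - 1) * x (t - s)) s with hk
  set bound : ℝ → ℝ := (Ioc (0:ℝ) (t0 + 1 - a)).indicator (fun s => s ^ (β - 1) * M') with hbd
  have hmeas : ∀ t : ℝ, AEStronglyMeasurable (k t) volume := by
    intro t
    apply Measurable.aestronglyMeasurable
    apply Measurable.indicator ?_ measurableSet_Ioc
    fun_prop
  have hbound_int : Integrable bound volume := by
    have h1 : IntegrableOn (fun s : ℝ => s ^ (β - 1) * M') (Ioc 0 (t0 + 1 - a)) volume := by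
      have h2 : IntervalIntegrable (fun s : ℝ => s ^ (β - 1) * M') volume 0 (t0 + 1 - a) :=
        (intervalIntegral.intervalIntegrable_rpow' (by linarith : (-1:ℝ) < β - 1)).mul_const M'
      exact (intervalIntegrable_iff_integrableOn_Ioc_of_le (by linarith)).1 h2
    exact h1.integrable_indicator measurableSet_Ioc
  have h_bound : ∀ᶠ t in 𝓝[S] t0, ∀ᵐ s ∂(volume : Measure ℝ), ‖k t s‖ ≤ bound s := by
    filter_upwards [self_mem_nhdsWithin] with t ht
    apply ae_of_all
    intro s
    by_cases hs : s ∈ Ioc (0:ℝ) (t - a)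
    · have h1 : s ∈ Ioc (0:ℝ) (t0 + 1 - a) := ⟨hs.1, hs.2.trans (by linarith [ht.2])⟩
      rw [hk, hbd]
      simp only [Set.indicator_of_mem hs, Set.indicator_of_mem h1]
      have hs0 : (0:ℝ) ≤ s ^ (β - 1) := Real.rpow_nonneg hs.1.le _
      rw [Real.norm_eq_abs, abs_mul, abs_of_nonneg hs0]
      refine mul_le_mul_of_nonneg_left (hMx (t - s) ⟨by linarith [hs.2], ?_⟩) hs0
      have := hs.1
      linarith [ht.2]
    · rw [hk, hbd]
      simp only [Set.indicator_of_notMem hs, norm_zero]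
      apply Set.indicator_nonneg
      intro s hs2
      exact mul_nonneg (Real.rpow_nonneg hs2.1.le _) hM'0
  have h_lim : ∀ᵐ s ∂(volume : Measure ℝ),
      Tendsto (fun t => k t s) (𝓝[S] t0) (𝓝 (k t0 s)) := by
    have hae : ∀ᵐ s ∂(volume : Measure ℝ), s ≠ t0 - a := by
      filter_upwards [MeasureTheory.compl_mem_ae_iff.mpr
        (MeasureTheory.measure_singleton (t0 - a))] with s hs
      simpa using hs
    filter_upwards [hae] with s hs
    rcases le_or_gt s 0 with hs0 | hs0
    · have hz : ∀ t : ℝ, k t s = 0 := fun t =>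
        Set.indicator_of_notMem (fun h => absurd h.1 (not_lt.2 hs0)) _
      simp only [hz]
      exact tendsto_const_nhds
    · rcases lt_or_gt_of_ne hs with hlt | hgt
      · -- 0 < s < t0 - a
        have hev : (fun t : ℝ => s ^ (β - 1) * x (t - s)) =ᶠ[𝓝[S] t0] fun t => k t s := by
          refine ((Filter.eventually_of_mem (Ioi_mem_nhds (by linarith : s + a < t0))
            (fun t (ht : t ∈ Ioi (s + a)) => ht)).filter_mono nhdsWithin_le_nhds).mono ?_
          intro t ht
          exact (Set.indicator_of_mem
            (show s ∈ Ioc (0:ℝ) (t - a) from ⟨hs0, by have := mem_Ioi.1 ht; linarith⟩)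
            (fun s => s ^ (β - 1) * x (t - s))).symm
        have hk0 : k t0 s = s ^ (β - 1) * x (t0 - s) :=
          Set.indicator_of_mem (show s ∈ Ioc (0:ℝ) (t0 - a) from ⟨hs0, hlt.le⟩)
            (fun s => s ^ (β - 1) * x (t0 - s))
        rw [hk0]
        have hcont : Tendsto (fun t => s ^ (β - 1) * x (t - s)) (𝓝[S] t0)
            (𝓝 (s ^ (β - 1) * x (t0 - s))) :=
          ((continuous_const.mul (hx.comp (continuous_id.sub continuous_const))).tendsto
            t0).mono_left nhdsWithin_le_nhds
        exact hcont.congr' hev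
      · -- s > t0 - a
        have hev : (fun _ : ℝ => (0:ℝ)) =ᶠ[𝓝[S] t0] fun t => k t s := by
          refine ((Filter.eventually_of_mem (Iio_mem_nhds (by linarith : t0 < s + a))
            (fun t (ht : t ∈ Iio (s + a)) => ht)).filter_mono nhdsWithin_le_nhds).mono ?_
          intro t ht
          exact (Set.indicator_of_notMem (fun h : s ∈ Ioc (0:ℝ) (t - a) => by
            have := mem_Iio.1 ht; have := h.2; linarith) _).symm
        have hk0 : k t0 s = 0 :=
          Set.indicator_of_notMem (fun h : s ∈ Ioc (0:ℝ) (t0 - a) => by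
            have := h.2; linarith) _
        rw [hk0]
        exact tendsto_const_nhds.congr' hev
  have key : Tendsto (fun t => ∫ s, k t s) (𝓝[S] t0) (𝓝 (∫ s, k t0 s)) :=
    MeasureTheory.tendsto_integral_filter_of_dominated_convergence bound
      (Filter.Eventually.of_forall hmeas) h_bound hbound_int h_lim
  have hGk : ∀ t, a ≤ t → (∫ u in a..t, (t - u) ^ (β - 1) * x u) = ∫ s, k t s := by
    intro t ht
    rw [subst_left, intervalIntegral.integral_of_le (by linarith : (0:ℝ) ≤ t - a),
      ← MeasureTheory.integral_indicator measurableSet_Ioc]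
  rw [ContinuousWithinAt,
    show 𝓝[Ici a] t0 = 𝓝[S] t0 by
      rw [hS, ← Set.Ici_inter_Iic]
      exact nhdsWithin_restrict' (Ici a) (Iic_mem_nhds (by linarith)),
    hGk t0 ht0']
  refine key.congr' ?_
  filter_upwards [self_mem_nhdsWithin] with t ht
  exact (hGk t ht.1).symm

end TF

namespace TF

lemma kernel_int {β : ℝ} (hβ : 0 < β) (a s : ℝ) :
    ∫ u in a..s, (s - u) ^ (β - 1) = (s - a) ^ β / β := by
  have h := intervalIntegral.integral_comp_sub_left (a := a) (b := s)
    (fun v => v ^ (β - 1)) s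
  rw [h, sub_self, int_rpow hβ]

lemma kernel_int' {β : ℝ} (hβ : 0 < β) (u t : ℝ) :
    ∫ s in u..t, (s - u) ^ (β - 1) = (t - u) ^ β / β := by
  have h := intervalIntegral.integral_comp_sub_right (a := u) (b := t)
    (fun v => v ^ (β - 1)) u
  rw [h, sub_self, int_rpow hβ]

lemma fubini_left {β : ℝ} (hβ : 0 < β) {x : ℝ → ℝ} (hx : Continuous x) {a t : ℝ} (hat : a ≤ t) :
    ∫ s in a..t, (∫ u in a..s, (s - u) ^ (β - 1) * x u) =
      ∫ u in a..t, ((t - u) ^ β / β) * x u := by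
  set μ : Measure ℝ := volume.restrict (Ioc a t) with hμ
  set K : ℝ × ℝ → ℝ := fun p => if p.2 < p.1 then (p.1 - p.2) ^ (β - 1) * x p.2 else 0 with hK
  have hKmeas : Measurable K := by
    apply Measurable.ite (measurableSet_lt measurable_snd measurable_fst) ?_ measurable_const
    fun_prop
  obtain ⟨M, hM⟩ := (isCompact_Icc (a := a) (b := t)).exists_bound_of_continuousOn
    hx.continuousOn
  set M' : ℝ := max M 0 with hM'
  have hM'0 : 0 ≤ M' := le_max_right _ _
  have hMx : ∀ y ∈ Icc a t, |x y| ≤ M' := fun y hy => (hM y hy).trans (le_max_left _ _)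
  have heqI : ∀ s : ℝ, (fun u => K (s, u)) =
      (Iio s).indicator (fun u => (s - u) ^ (β - 1) * x u) := by
    intro s; funext u
    simp [hK, Set.indicator_apply, mem_Iio]
  have hsetI : ∀ {s : ℝ}, s ∈ Ioc a t → Iio s ∩ Ioc a t = Ioo a s := by
    intro s hs
    ext u
    simp only [mem_inter_iff, mem_Iio, mem_Ioc, mem_Ioo]
    constructor
    · rintro ⟨h1, h2, _⟩; exact ⟨h2, h1⟩
    · rintro ⟨h1, h2⟩; exact ⟨h2, h1, by linarith [hs.2]⟩
  have hinner : ∀ s ∈ Ioc a t, ∫ u, K (s, u) ∂μ = ∫ u in a..s, (s - u) ^ (β - 1) * x u := by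
    intro s hs
    rw [heqI s, MeasureTheory.integral_indicator measurableSet_Iio, hμ,
      Measure.restrict_restrict measurableSet_Iio, hsetI hs,
      ← integral_Ioc_eq_integral_Ioo, ← intervalIntegral.integral_of_le hs.1.le]
  have hsec : ∀ s ∈ Ioc a t, Integrable (fun u => K (s, u)) μ := by
    intro s hs
    rw [heqI s, integrable_indicator_iff measurableSet_Iio, IntegrableOn, hμ,
      Measure.restrict_restrict measurableSet_Iio, hsetI hs]
    have h1 := (II_left hβ hx a s)
    rw [intervalIntegrable_iff_integrableOn_Ioc_of_le hs.1.le] at h1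
    exact h1.mono_set Ioo_subset_Ioc_self
  have hsec_ae : ∀ᵐ s ∂μ, Integrable (fun u => K (s, u)) μ := by
    filter_upwards [self_mem_ae_restrict measurableSet_Ioc] with s hs
    exact hsec s hs
  -- bound for the norm integrals
  set C : ℝ := M' * ((t - a) ^ β / β) with hC
  have hbd2int : ∀ s ∈ Ioc a t,
      Integrable ((Ioo a s).indicator (fun u => (s - u) ^ (β - 1) * M')) μ := by
    intro s hs
    have hIoosub : Ioo a s ∩ Ioc a t = Ioo a s :=
      inter_eq_self_of_subset_left (fun u hu => ⟨hu.1, hu.2.le.trans hs.2⟩)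
    rw [integrable_indicator_iff measurableSet_Ioo, IntegrableOn, hμ,
      Measure.restrict_restrict measurableSet_Ioo, hIoosub]
    have h1 := (II_left hβ (continuous_const : Continuous fun _ : ℝ => M') a s)
    rw [intervalIntegrable_iff_integrableOn_Ioc_of_le hs.1.le] at h1
    exact h1.mono_set Ioo_subset_Ioc_self
  have hIntNorm : Integrable (fun s => ∫ u, ‖K (s, u)‖ ∂μ) μ := by
    apply Integrable.mono' (integrable_const C)
    · exact (hKmeas.aestronglyMeasurable.norm.integral_prod_right' :
        AEStronglyMeasurable (fun s => ∫ u, ‖K (s, u)‖ ∂μ) μ)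
    · filter_upwards [self_mem_ae_restrict measurableSet_Ioc] with s hs
      rw [Real.norm_eq_abs, abs_of_nonneg (integral_nonneg fun u => norm_nonneg _)]
      have step1 : ∫ u, ‖K (s, u)‖ ∂μ ≤
          ∫ u, (Ioo a s).indicator (fun u => (s - u) ^ (β - 1) * M') u ∂μ := by
        apply integral_mono_ae ((hsec s hs).norm) (hbd2int s hs)
        filter_upwards [self_mem_ae_restrict measurableSet_Ioc] with u hu
        by_cases hus : u < s
        · have hmem : u ∈ Ioo a s := ⟨hu.1, hus⟩
          rw [Set.indicator_of_mem hmem]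
          have h0 : (0:ℝ) ≤ (s - u) ^ (β - 1) := Real.rpow_nonneg (by linarith) _
          have : K (s, u) = (s - u) ^ (β - 1) * x u := if_pos hus
          rw [this, Real.norm_eq_abs, abs_mul, abs_of_nonneg h0]
          exact mul_le_mul_of_nonneg_left (hMx u ⟨hu.1.le, hu.2⟩) h0
        · have : K (s, u) = 0 := if_neg hus
          rw [this, norm_zero]
          apply Set.indicator_nonneg
          intro v hv
          exact mul_nonneg (Real.rpow_nonneg (by linarith [hv.2]) _) hM'0
      have step2 : ∫ u, (Ioo a s).indicator (fun u => (s - u) ^ (β - 1) * M') u ∂μ =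
          ((s - a) ^ β / β) * M' := by
        have hIoosub : Ioo a s ∩ Ioc a t = Ioo a s :=
          inter_eq_self_of_subset_left (fun u hu => ⟨hu.1, hu.2.le.trans hs.2⟩)
        rw [MeasureTheory.integral_indicator measurableSet_Ioo, hμ,
          Measure.restrict_restrict measurableSet_Ioo, hIoosub,
          ← integral_Ioc_eq_integral_Ioo, ← intervalIntegral.integral_of_le hs.1.le,
          intervalIntegral.integral_mul_const, kernel_int hβ]
      have step3 : ((s - a) ^ β / β) * M' ≤ C := by
        rw [hC, mul_comm]
        apply mul_le_mul_of_nonneg_left _ hM'0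
        have h4 : (s - a) ^ β ≤ (t - a) ^ β :=
          Real.rpow_le_rpow (by linarith [hs.1]) (by linarith [hs.2]) hβ.le
        exact (div_le_div_iff_of_pos_right hβ).mpr h4
      linarith [step1, step2.le, step2.ge, step3]
  have hIntK : Integrable K (μ.prod μ) := by
    rw [integrable_prod_iff hKmeas.aestronglyMeasurable]
    exact ⟨hsec_ae, hIntNorm⟩
  have hswap : ∫ s, (∫ u, K (s, u) ∂μ) ∂μ = ∫ u, (∫ s, K (s, u) ∂μ) ∂μ :=
    MeasureTheory.integral_integral_swap (f := fun s u => K (s, u)) (by exact hIntK)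
  have hinner2 : ∀ u ∈ Ioc a t, ∫ s, K (s, u) ∂μ = ((t - u) ^ β / β) * x u := by
    intro u hu
    have heqI2 : (fun s => K (s, u)) =
        (Ioi u).indicator (fun s => (s - u) ^ (β - 1) * x u) := by
      funext s; simp [hK, Set.indicator_apply, mem_Ioi]
    have hset2 : Ioi u ∩ Ioc a t = Ioc u t := by
      ext s; simp only [mem_inter_iff, mem_Ioi, mem_Ioc]
      constructor
      · rintro ⟨h1, _, h3⟩; exact ⟨h1, h3⟩
      · rintro ⟨h1, h2⟩; exact ⟨h1, lt_trans hu.1 h1, h2⟩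
    rw [heqI2, MeasureTheory.integral_indicator measurableSet_Ioi, hμ,
      Measure.restrict_restrict measurableSet_Ioi, hset2,
      ← intervalIntegral.integral_of_le hu.2,
      intervalIntegral.integral_mul_const, kernel_int' hβ]
  calc ∫ s in a..t, (∫ u in a..s, (s - u) ^ (β - 1) * x u)
      = ∫ s, (∫ u, K (s, u) ∂μ) ∂μ := by
        rw [intervalIntegral.integral_of_le hat]
        exact (setIntegral_congr_fun measurableSet_Ioc (fun s hs => hinner s hs)).symm
    _ = ∫ u, (∫ s, K (s, u) ∂μ) ∂μ := hswap
    _ = ∫ u in a..t, ((t - u) ^ β / β) * x u := by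
        rw [intervalIntegral.integral_of_le hat]
        exact setIntegral_congr_fun measurableSet_Ioc (fun u hu => hinner2 u hu)

end TF


namespace TF

lemma hasDeriv_left {β : ℝ} (hβ : 0 < β) {x : ℝ → ℝ} (hx : Continuous x) {a t : ℝ}
    (hat : a < t) : HasDerivAt (RLintLeft a (β + 1) x) (RLintLeft a β x t) t := by
  have hβ' : Real.Gamma β ≠ 0 := (Real.Gamma_pos_of_pos hβ).ne'
  have hwcont : ContinuousOn (fun s => ∫ u in a..s, (s - u) ^ (β - 1) * x u) (Ici a) :=
    contOn_left hβ hx a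
  have hwcontAt : ContinuousAt (fun s => ∫ u in a..s, (s - u) ^ (β - 1) * x u) t :=
    (hwcont t hat.le).continuousAt (Ici_mem_nhds hat)
  have hInt : IntervalIntegrable (fun s => ∫ u in a..s, (s - u) ^ (β - 1) * x u) volume a t :=
    (hwcont.mono (by rw [uIcc_of_le hat.le]; exact Icc_subset_Ici_self)).intervalIntegrable
  have hmeasAt : StronglyMeasurableAtFilter
      (fun s => ∫ u in a..s, (s - u) ^ (β - 1) * x u) (𝓝 t) :=
    ⟨Ioi a, Ioi_mem_nhds hat,
      ((hwcont.mono Ioi_subset_Ici_self).aestronglyMeasurable measurableSet_Ioi)⟩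
  have hftc : HasDerivAt (fun r => ∫ s in a..r, (∫ u in a..s, (s - u) ^ (β - 1) * x u))
      (∫ u in a..t, (t - u) ^ (β - 1) * x u) t :=
    intervalIntegral.integral_hasDerivAt_right hInt hmeasAt hwcontAt
  have hftc' : HasDerivAt
      (fun r => (1 / Real.Gamma β) * ∫ s in a..r, (∫ u in a..s, (s - u) ^ (β - 1) * x u))
      ((1 / Real.Gamma β) * ∫ u in a..t, (t - u) ^ (β - 1) * x u) t := hftc.const_mul _
  have hev : RLintLeft a (β + 1) x =ᶠ[𝓝 t]
      (fun r => (1 / Real.Gamma β) * ∫ s in a..r, (∫ u in a..s, (s - u) ^ (β - 1) * x u)) := by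
    filter_upwards [Ioi_mem_nhds hat] with r hr
    rw [RLintLeft, fubini_left hβ hx (le_of_lt hr),
      show β + 1 - 1 = β from by ring]
    have e2 : ∀ u : ℝ, ((r - u) ^ β / β) * x u = (1 / β) * ((r - u) ^ β * x u) :=
      fun u => by ring
    simp only [e2]
    rw [intervalIntegral.integral_const_mul, Real.Gamma_add_one hβ.ne']
    ring
  exact hftc'.congr_of_eventuallyEq hev

end TF

namespace TF

lemma refl_id (b β : ℝ) (x : ℝ → ℝ) (t : ℝ) :
    RLintRight b β x t = RLintLeft (-b) β (fun u => x (-u)) (-t) := by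
  rw [RLintRight, RLintLeft]
  congr 1
  have h := intervalIntegral.integral_comp_neg (a := -b) (b := -t)
    (fun v => (v - t) ^ (β - 1) * x v)
  simp only [neg_neg] at h
  have e : ∀ u : ℝ, (-t - u : ℝ) = -u - t := fun u => by ring
  simp only [e]
  exact h.symm

lemma hasDeriv_right {β : ℝ} (hβ : 0 < β) {x : ℝ → ℝ} (hx : Continuous x) {b t : ℝ}
    (htb : t < b) : HasDerivAt (RLintRight b (β + 1) x) (-(RLintRight b β x t)) t := by
  have hA : HasDerivAt (RLintLeft (-b) (β + 1) (fun u => x (-u)))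
      (RLintLeft (-b) β (fun u => x (-u)) (-t)) (-t) :=
    hasDeriv_left hβ (hx.comp continuous_neg) (show -b < -t by linarith)
  have hcomp : HasDerivAt (fun s : ℝ => RLintLeft (-b) (β + 1) (fun u => x (-u)) (-s))
      (RLintLeft (-b) β (fun u => x (-u)) (-t) * (-1)) t := hA.comp t (hasDerivAt_neg t)
  have hfun : RLintRight b (β + 1) x =
      fun s => RLintLeft (-b) (β + 1) (fun u => x (-u)) (-s) :=
    funext fun s => refl_id b (β + 1) x s
  rw [hfun, show -(RLintRight b β x t) = RLintLeft (-b) β (fun u => x (-u)) (-t) * (-1) from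
    by rw [refl_id b β x t]; ring]
  exact hcomp

end TF

namespace TF

lemma ibp_left {α : ℝ} (hα : α ∈ Set.Ioo (0:ℝ) 1) {x : ℝ → ℝ}
    (hdx : Differentiable ℝ x) (hx' : Continuous (deriv x)) {a T : ℝ} (haT : a ≤ T) :
    ∫ u in a..T, (T - u) ^ (-α) * x u =
      (1 / (1 - α)) * ((T - a) ^ (1 - α) * x a)
        + (1 / (1 - α)) * ∫ u in a..T, (T - u) ^ (1 - α) * deriv x u := by
  have hx : Continuous x := hdx.continuous
  have h1α : (0:ℝ) < 1 - α := by linarith [hα.2]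
  rcases eq_or_lt_of_le haT with heq | hlt
  · subst heq
    simp [Real.zero_rpow h1α.ne', sub_self]
  · set Φ : ℝ → ℝ := fun u => (-(1 / (1 - α)) * (T - u) ^ (1 - α)) * x u with hΦ
    have hrpc : Continuous fun v : ℝ => v ^ (1 - α) :=
      continuous_iff_continuousAt.mpr fun v => Real.continuousAt_rpow_const v _ (Or.inr h1α.le)
    have hcont : ContinuousOn Φ (Icc a T) :=
      (((continuous_const.mul (hrpc.comp (continuous_const.sub continuous_id))).mul
        hx)).continuousOn
    have hderiv : ∀ u ∈ Ioo a T, HasDerivWithinAt Φ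
        ((T - u) ^ (-α) * x u - (1 / (1 - α)) * ((T - u) ^ (1 - α) * deriv x u)) (Ioi u) u := by
      intro u hu
      have hTu : T - u ≠ 0 := by have := hu.2; intro h; linarith [sub_eq_zero.mp h]
      have hrp : HasDerivAt (fun v : ℝ => v ^ (1 - α)) ((1 - α) * (T - u) ^ (-α)) (T - u) := by
        have := Real.hasDerivAt_rpow_const (x := T - u) (p := 1 - α) (Or.inl hTu)
        rwa [show (1 - α - 1 : ℝ) = -α from by ring] at this
      have hin : HasDerivAt (fun u : ℝ => T - u) (-1) u := (hasDerivAt_id u).const_sub T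
      have hcomp : HasDerivAt (fun u : ℝ => (T - u) ^ (1 - α))
          ((1 - α) * (T - u) ^ (-α) * -1) u := hrp.comp u hin
      have hmul : HasDerivAt (fun u : ℝ => -(1 / (1 - α)) * (T - u) ^ (1 - α))
          (-(1 / (1 - α)) * ((1 - α) * (T - u) ^ (-α) * -1)) u := hcomp.const_mul _
      have hfull := hmul.mul (hdx u).hasDerivAt
      have hVeq : -(1 / (1 - α)) * ((1 - α) * (T - u) ^ (-α) * -1) * x u
            + (-(1 / (1 - α)) * (T - u) ^ (1 - α)) * deriv x u
          = (T - u) ^ (-α) * x u - (1 / (1 - α)) * ((T - u) ^ (1 - α) * deriv x u) := by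
        field_simp
        ring
      rw [hVeq] at hfull
      exact hfull.hasDerivWithinAt
    have hint1 : IntervalIntegrable (fun u => (T - u) ^ (-α) * x u) volume a T := by
      have := II_left (β := 1 - α) h1α hx a T
      rwa [show (1 - α - 1 : ℝ) = -α from by ring] at this
    have hint2 : IntervalIntegrable (fun u => (T - u) ^ (1 - α) * deriv x u) volume a T := by
      have := II_left (β := 2 - α) (by linarith) hx' a T
      rwa [show (2 - α - 1 : ℝ) = 1 - α from by ring] at this
    have hint : IntervalIntegrable (fun u =>
        (T - u) ^ (-α) * x u - (1 / (1 - α)) * ((T - u) ^ (1 - α) * deriv x u)) volume a T :=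
      hint1.sub (hint2.const_mul _)
    have hFTC := intervalIntegral.integral_eq_sub_of_hasDeriv_right_of_le haT hcont hderiv hint
    rw [intervalIntegral.integral_sub hint1 (hint2.const_mul _),
      intervalIntegral.integral_const_mul] at hFTC
    have hΦT : Φ T = 0 := by
      rw [hΦ]; simp [sub_self, Real.zero_rpow h1α.ne']
    have hΦa : Φ a = (-(1 / (1 - α)) * (T - a) ^ (1 - α)) * x a := rfl
    rw [hΦT, hΦa] at hFTC
    linarith [hFTC]

lemma ibp_right {α : ℝ} (hα : α ∈ Set.Ioo (0:ℝ) 1) {x : ℝ → ℝ}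
    (hdx : Differentiable ℝ x) (hx' : Continuous (deriv x)) {T b : ℝ} (hTb : T ≤ b) :
    ∫ u in T..b, (u - T) ^ (-α) * x u =
      (1 / (1 - α)) * ((b - T) ^ (1 - α) * x b)
        - (1 / (1 - α)) * ∫ u in T..b, (u - T) ^ (1 - α) * deriv x u := by
  have hx : Continuous x := hdx.continuous
  have h1α : (0:ℝ) < 1 - α := by linarith [hα.2]
  rcases eq_or_lt_of_le hTb with heq | hlt
  · subst heq
    simp [Real.zero_rpow h1α.ne', sub_self]
  · set Φ : ℝ → ℝ := fun u => ((1 / (1 - α)) * (u - T) ^ (1 - α)) * x u with hΦ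
    have hrpc : Continuous fun v : ℝ => v ^ (1 - α) :=
      continuous_iff_continuousAt.mpr fun v => Real.continuousAt_rpow_const v _ (Or.inr h1α.le)
    have hcont : ContinuousOn Φ (Icc T b) :=
      (((continuous_const.mul (hrpc.comp (continuous_id.sub continuous_const))).mul
        hx)).continuousOn
    have hderiv : ∀ u ∈ Ioo T b, HasDerivWithinAt Φ
        ((u - T) ^ (-α) * x u + (1 / (1 - α)) * ((u - T) ^ (1 - α) * deriv x u)) (Ioi u) u := by
      intro u hu
      have hTu : u - T ≠ 0 := by have := hu.1; intro h; linarith [sub_eq_zero.mp h]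
      have hrp : HasDerivAt (fun v : ℝ => v ^ (1 - α)) ((1 - α) * (u - T) ^ (-α)) (u - T) := by
        have := Real.hasDerivAt_rpow_const (x := u - T) (p := 1 - α) (Or.inl hTu)
        rwa [show (1 - α - 1 : ℝ) = -α from by ring] at this
      have hin : HasDerivAt (fun u : ℝ => u - T) 1 u := (hasDerivAt_id u).sub_const T
      have hcomp : HasDerivAt (fun u : ℝ => (u - T) ^ (1 - α))
          ((1 - α) * (u - T) ^ (-α) * 1) u := by have h := hrp.comp u hin; exact h
      have hmul : HasDerivAt (fun u : ℝ => (1 / (1 - α)) * (u - T) ^ (1 - α))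
          ((1 / (1 - α)) * ((1 - α) * (u - T) ^ (-α) * 1)) u := hcomp.const_mul _
      have hfull := hmul.mul (hdx u).hasDerivAt
      have hVeq : (1 / (1 - α)) * ((1 - α) * (u - T) ^ (-α) * 1) * x u
            + ((1 / (1 - α)) * (u - T) ^ (1 - α)) * deriv x u
          = (u - T) ^ (-α) * x u + (1 / (1 - α)) * ((u - T) ^ (1 - α) * deriv x u) := by
        field_simp
      rw [hVeq] at hfull
      exact hfull.hasDerivWithinAt
    have hint1 : IntervalIntegrable (fun u => (u - T) ^ (-α) * x u) volume T b := by
      have := II_right (β := 1 - α) h1α hx T b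
      rwa [show (1 - α - 1 : ℝ) = -α from by ring] at this
    have hint2 : IntervalIntegrable (fun u => (u - T) ^ (1 - α) * deriv x u) volume T b := by
      have := II_right (β := 2 - α) (by linarith) hx' T b
      rwa [show (2 - α - 1 : ℝ) = 1 - α from by ring] at this
    have hint : IntervalIntegrable (fun u =>
        (u - T) ^ (-α) * x u + (1 / (1 - α)) * ((u - T) ^ (1 - α) * deriv x u)) volume T b :=
      hint1.add (hint2.const_mul _)
    have hFTC := intervalIntegral.integral_eq_sub_of_hasDeriv_right_of_le hTb hcont hderiv hint
    rw [intervalIntegral.integral_add hint1 (hint2.const_mul _),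
      intervalIntegral.integral_const_mul] at hFTC
    have hΦT : Φ T = 0 := by
      rw [hΦ]; simp [sub_self, Real.zero_rpow h1α.ne']
    have hΦb : Φ b = ((1 / (1 - α)) * (b - T) ^ (1 - α)) * x b := rfl
    rw [hΦT, hΦb] at hFTC
    linarith [hFTC]

end TF

namespace TF

lemma hasDeriv_left_low {α : ℝ} (hα : α ∈ Set.Ioo (0:ℝ) 1) {x : ℝ → ℝ}
    (hdx : Differentiable ℝ x) (hx' : Continuous (deriv x)) {a t : ℝ} (hxa : x a = 0)
    (hat : a < t) :
    HasDerivAt (RLintLeft a (1 - α) x) (RLintLeft a (1 - α) (deriv x) t) t := by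
  have h1α : (0:ℝ) < 1 - α := by linarith [hα.2]
  have hid : ∀ T, a ≤ T →
      RLintLeft a (1 - α) x T = RLintLeft a ((1 - α) + 1) (deriv x) T := by
    intro T hT
    rw [RLintLeft, RLintLeft, show (1 - α - 1 : ℝ) = -α from by ring,
      ibp_left hα hdx hx' hT, hxa, show (1 - α + 1 - 1 : ℝ) = 1 - α from by ring,
      Real.Gamma_add_one h1α.ne']
    have hΓ : Real.Gamma (1 - α) ≠ 0 := (Real.Gamma_pos_of_pos h1α).ne'
    field_simp
    simp
  have hA : HasDerivAt (RLintLeft a ((1 - α) + 1) (deriv x))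
      (RLintLeft a (1 - α) (deriv x) t) t := hasDeriv_left h1α hx' hat
  apply hA.congr_of_eventuallyEq
  filter_upwards [Ioi_mem_nhds hat] with r hr
  exact hid r (le_of_lt hr)

lemma hasDeriv_right_low {α : ℝ} (hα : α ∈ Set.Ioo (0:ℝ) 1) {g : ℝ → ℝ}
    (hdg : Differentiable ℝ g) (hg' : Continuous (deriv g)) {t b : ℝ} (htb : t < b) :
    HasDerivAt (RLintRight b (1 - α) g)
      (-((1 / Real.Gamma (1 - α)) * ((b - t) ^ (-α) * g b))
        + RLintRight b (1 - α) (deriv g) t) t := by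
  have h1α : (0:ℝ) < 1 - α := by linarith [hα.2]
  have hΓ : Real.Gamma (1 - α) ≠ 0 := (Real.Gamma_pos_of_pos h1α).ne'
  have hid : ∀ T, T ≤ b → RLintRight b (1 - α) g T =
      (1 / Real.Gamma ((1 - α) + 1)) * ((b - T) ^ (1 - α) * g b)
        - RLintRight b ((1 - α) + 1) (deriv g) T := by
    intro T hT
    rw [RLintRight, RLintRight, show (1 - α - 1 : ℝ) = -α from by ring,
      ibp_right hα hdg hg' hT, show (1 - α + 1 - 1 : ℝ) = 1 - α from by ring,
      Real.Gamma_add_one h1α.ne']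
    field_simp
  have hbt : b - t ≠ 0 := by intro h; have := sub_eq_zero.mp h; linarith
  have hrp : HasDerivAt (fun v : ℝ => v ^ (1 - α)) ((1 - α) * (b - t) ^ (-α)) (b - t) := by
    have := Real.hasDerivAt_rpow_const (x := b - t) (p := 1 - α) (Or.inl hbt)
    rwa [show (1 - α - 1 : ℝ) = -α from by ring] at this
  have hin : HasDerivAt (fun T : ℝ => b - T) (-1) t := (hasDerivAt_id t).const_sub b
  have hcomp : HasDerivAt (fun T : ℝ => (b - T) ^ (1 - α))
      ((1 - α) * (b - t) ^ (-α) * -1) t := hrp.comp t hin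
  have hfirst : HasDerivAt
      (fun T : ℝ => (1 / Real.Gamma ((1 - α) + 1)) * ((b - T) ^ (1 - α) * g b))
      ((1 / Real.Gamma ((1 - α) + 1)) * (((1 - α) * (b - t) ^ (-α) * -1) * g b)) t :=
    (hcomp.mul_const (g b)).const_mul _
  have hsecond : HasDerivAt (RLintRight b ((1 - α) + 1) (deriv g))
      (-(RLintRight b (1 - α) (deriv g) t)) t := hasDeriv_right h1α hg' htb
  have hΨ := hfirst.sub hsecond
  have hval : (1 / Real.Gamma ((1 - α) + 1)) * (((1 - α) * (b - t) ^ (-α) * -1) * g b)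
        - (-(RLintRight b (1 - α) (deriv g) t))
      = -((1 / Real.Gamma (1 - α)) * ((b - t) ^ (-α) * g b))
        + RLintRight b (1 - α) (deriv g) t := by
    rw [Real.Gamma_add_one h1α.ne']
    field_simp
    ring
  rw [hval] at hΨ
  apply hΨ.congr_of_eventuallyEq
  filter_upwards [Iio_mem_nhds htb] with r hr
  exact hid r (le_of_lt hr)

end TF

namespace TF

lemma smooth_iter {f : ℝ → ℝ} (hf : ContDiff ℝ ((⊤ : ℕ∞) : WithTop ℕ∞) f) :
    ∀ n, ContDiff ℝ ((⊤ : ℕ∞) : WithTop ℕ∞) (iteratedDeriv n f)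
  | 0 => by simpa [iteratedDeriv_zero] using hf
  | (n+1) => by
      rw [iteratedDeriv_succ']
      exact smooth_iter ((contDiff_infty_iff_deriv.mp hf).2) n

lemma iter_hasDeriv {f : ℝ → ℝ} (hf : ContDiff ℝ ((⊤ : ℕ∞) : WithTop ℕ∞) f) (n : ℕ) (t : ℝ) :
    HasDerivAt (iteratedDeriv n f) (iteratedDeriv (n + 1) f t) t := by
  rw [iteratedDeriv_succ]
  exact ((smooth_iter hf n).differentiable (by simp) t).hasDerivAt

noncomputable def Dfun (a b α : ℝ) (f g : ℝ → ℝ) (s : ℝ) : ℝ :=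
  g s * RLintLeft a (1 - α) (deriv (fun u => f u - f a)) s
    + f s * (-((1 / Real.Gamma (1 - α)) * ((b - s) ^ (-α) * g b))
        + RLintRight b (1 - α) (deriv g) s)

noncomputable def Wfun (a b α : ℝ) (f g : ℝ → ℝ) (s : ℝ) : ℕ → ℝ
  | 0 => -(Dfun a b α f g s)
  | (r+1) => (-1:ℝ)^r * iteratedDeriv (r+1) g s
        * RLintLeft a ((r:ℝ) + 1 - α) (fun u => f u - f a) s
      + iteratedDeriv (r+1) f s * RLintRight b ((r:ℝ) + 1 - α) g s

lemma per_term {a b α : ℝ} (hα : α ∈ Set.Ioo (0:ℝ) 1)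
    {f g : ℝ → ℝ} (hf : ContDiff ℝ (⊤ : ℕ∞) f) (hg : ContDiff ℝ (⊤ : ℕ∞) g)
    {s : ℝ} (hs : s ∈ Set.Ioo a b) (r : ℕ) :
    HasDerivAt (fun s' => (-1:ℝ)^r * iteratedDeriv r g s'
        * RLintLeft a ((r:ℝ) + 1 - α) (fun u => f u - f a) s'
      + iteratedDeriv r f s' * RLintRight b ((r:ℝ) + 1 - α) g s')
      (Wfun a b α f g s (r+1) - Wfun a b α f g s r) s := by
  have hsa : a < s := hs.1
  have hsb : s < b := hs.2
  replace hf : ContDiff ℝ ((⊤ : ℕ∞) : WithTop ℕ∞) f := hf.of_le (by simp)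
  replace hg : ContDiff ℝ ((⊤ : ℕ∞) : WithTop ℕ∞) g := hg.of_le (by simp)
  have hFdiff : Differentiable ℝ (fun u => f u - f a) :=
    (hf.differentiable (by simp)).sub_const _
  have hFc : Continuous (fun u => f u - f a) := hFdiff.continuous
  have hdF : deriv (fun u => f u - f a) = deriv f := funext fun u => deriv_sub_const _
  have hF'c : Continuous (deriv (fun u => f u - f a)) := by
    rw [hdF]; exact ((contDiff_infty_iff_deriv.mp hf).2).continuous
  have hFa : (fun u => f u - f a) a = 0 := sub_self _
  have hgd : Differentiable ℝ g := hg.differentiable (by simp)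
  have hg'c : Continuous (deriv g) := ((contDiff_infty_iff_deriv.mp hg).2).continuous
  have hgc : Continuous g := hgd.continuous
  cases r with
  | zero =>
    rw [show ((0:ℕ):ℝ) + 1 - α = 1 - α from by norm_num]
    have hL : HasDerivAt (RLintLeft a (1 - α) (fun u => f u - f a))
        (RLintLeft a (1 - α) (deriv (fun u => f u - f a)) s) s :=
      hasDeriv_left_low hα hFdiff hF'c hFa hsa
    have hR := hasDeriv_right_low hα hgd hg'c hsb
    have hsum := (((iter_hasDeriv hg 0 s).const_mul ((-1:ℝ)^(0:ℕ))).mul hL).add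
      ((iter_hasDeriv hf 0 s).mul hR)
    refine hsum.congr_deriv ?_
    simp only [Wfun, Dfun, iteratedDeriv_zero, Nat.cast_zero]
    rw [show (0:ℝ) + 1 - α = 1 - α from by norm_num]
    ring
  | succ n =>
    push_cast
    rw [show ((n:ℝ) + 1) + 1 - α = ((n:ℝ) + 1 - α) + 1 from by ring]
    have hβpos : (0:ℝ) < (n:ℝ) + 1 - α := by
      have : (0:ℝ) ≤ (n:ℝ) := Nat.cast_nonneg n
      linarith [hα.2]
    have hL : HasDerivAt (RLintLeft a (((n:ℝ) + 1 - α) + 1) (fun u => f u - f a))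
        (RLintLeft a ((n:ℝ) + 1 - α) (fun u => f u - f a) s) s :=
      hasDeriv_left hβpos hFc hsa
    have hR : HasDerivAt (RLintRight b (((n:ℝ) + 1 - α) + 1) g)
        (-(RLintRight b ((n:ℝ) + 1 - α) g s)) s :=
      hasDeriv_right hβpos hgc hsb
    have hsum := (((iter_hasDeriv hg (n+1) s).const_mul ((-1:ℝ)^(n+1))).mul hL).add
      ((iter_hasDeriv hf (n+1) s).mul hR)
    refine hsum.congr_deriv ?_
    simp only [Wfun]
    push_cast
    rw [show ((n:ℝ) + 1) + 1 - α = ((n:ℝ) + 1 - α) + 1 from by ring]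
    ring

end TF



/-- Transfer Formula. -/
theorem transfer_formula
    (a b α : ℝ) (hab : a < b) (hα : α ∈ Set.Ioo (0 : ℝ) 1)
    (f g : ℝ → ℝ) (hf : ContDiff ℝ (⊤ : ℕ∞) f) (hg : ContDiff ℝ (⊤ : ℕ∞) g)
    -- condition (C):
    (hC1 : TendstoUniformlyOn
      (fun (k : ℕ) (t : ℝ) =>
        iteratedDeriv k g t * RLintLeft a ((k : ℝ) - α) (fun u => f u - f a) t)
      0 Filter.atTop (Set.Icc a b))
    (hC2 : TendstoUniformlyOn
      (fun (k : ℕ) (t : ℝ) => iteratedDeriv k f t * RLintRight b ((k : ℝ) - α) g t)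
      0 Filter.atTop (Set.Icc a b))
    -- the series converges to a differentiable function of t on (a,b):
    (hsum : ∀ t ∈ Set.Ioo a b, Summable (fun r : ℕ =>
      (-1 : ℝ) ^ r * iteratedDeriv r g t * RLintLeft a ((r : ℝ) + 1 - α) (fun u => f u - f a) t
        + iteratedDeriv r f t * RLintRight b ((r : ℝ) + 1 - α) g t))
    (hdiff : ∀ t ∈ Set.Ioo a b, DifferentiableAt ℝ
      (fun s => ∑' r : ℕ,
        ((-1 : ℝ) ^ r * iteratedDeriv r g s
            * RLintLeft a ((r : ℝ) + 1 - α) (fun u => f u - f a) s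
          + iteratedDeriv r f s * RLintRight b ((r : ℝ) + 1 - α) g s)) t) :
    ∀ t ∈ Set.Ioo a b,
      g t * caputoLeft a α f t - f t * RLderivRight b α g t
        = deriv (fun s => ∑' r : ℕ,
            ((-1 : ℝ) ^ r * iteratedDeriv r g s
                * RLintLeft a ((r : ℝ) + 1 - α) (fun u => f u - f a) s
              + iteratedDeriv r f s * RLintRight b ((r : ℝ) + 1 - α) g s)) t := by
  intro t ht
  have hta : a < t := ht.1
  have htb : t < b := ht.2
  have hf8 : ContDiff ℝ ((⊤ : ℕ∞) : WithTop ℕ∞) f := hf.of_le (by simp)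
  have hg8 : ContDiff ℝ ((⊤ : ℕ∞) : WithTop ℕ∞) g := hg.of_le (by simp)
  have hFdiff : Differentiable ℝ (fun u => f u - f a) :=
    (hf8.differentiable (by simp)).sub_const _
  have hdF : deriv (fun u => f u - f a) = deriv f := funext fun u => deriv_sub_const _
  have hF'c : Continuous (deriv (fun u => f u - f a)) := by
    rw [hdF]; exact ((contDiff_infty_iff_deriv.mp hf8).2).continuous
  have hFa : (fun u => f u - f a) a = 0 := sub_self _
  have hgd : Differentiable ℝ g := hg8.differentiable (by simp)
  have hg'c : Continuous (deriv g) := ((contDiff_infty_iff_deriv.mp hg8).2).continuous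
  -- derivatives of partial sums
  have hP : ∀ N : ℕ, ∀ s ∈ Set.Ioo a b,
      HasDerivAt (fun s' => ∑ r ∈ Finset.range N,
        ((-1:ℝ)^r * iteratedDeriv r g s'
            * RLintLeft a ((r:ℝ) + 1 - α) (fun u => f u - f a) s'
          + iteratedDeriv r f s' * RLintRight b ((r:ℝ) + 1 - α) g s'))
        (TF.Wfun a b α f g s N + TF.Dfun a b α f g s) s := by
    intro N s hs
    have h := HasDerivAt.fun_sum (u := Finset.range N)
      (fun r _ => TF.per_term hα hf hg hs r)
    rw [Finset.sum_range_sub (TF.Wfun a b α f g s)] at h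
    have hW0 : TF.Wfun a b α f g s 0 = -(TF.Dfun a b α f g s) := rfl
    rw [hW0, sub_neg_eq_add] at h
    exact h
  -- uniform convergence of the derivatives
  have hunif : TendstoUniformlyOn
      (fun (N : ℕ) s => TF.Wfun a b α f g s N + TF.Dfun a b α f g s)
      (fun s => TF.Dfun a b α f g s) Filter.atTop (Set.Ioo a b) := by
    rw [Metric.tendstoUniformlyOn_iff]
    intro ε hε
    rw [Metric.tendstoUniformlyOn_iff] at hC1 hC2
    obtain ⟨K1, hK1⟩ := Filter.eventually_atTop.mp (hC1 (ε/2) (by linarith))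
    obtain ⟨K2, hK2⟩ := Filter.eventually_atTop.mp (hC2 (ε/2) (by linarith))
    refine Filter.eventually_atTop.mpr ⟨K1 + K2 + 1, fun N hN s hs => ?_⟩
    obtain ⟨r, rfl⟩ : ∃ r, N = r + 1 := Nat.exists_eq_succ_of_ne_zero (by omega)
    have hsIcc : s ∈ Set.Icc a b := ⟨hs.1.le, hs.2.le⟩
    have h1 := hK1 (r+1) (by omega) s hsIcc
    have h2 := hK2 (r+1) (by omega) s hsIcc
    rw [Real.dist_eq] at h1 h2 ⊢
    simp only [Pi.zero_apply, zero_sub, abs_neg] at h1 h2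
    have hgoal : TF.Dfun a b α f g s - (TF.Wfun a b α f g s (r+1) + TF.Dfun a b α f g s)
        = -(TF.Wfun a b α f g s (r+1)) := by ring
    rw [hgoal, abs_neg]
    have hWe : TF.Wfun a b α f g s (r+1) = (-1:ℝ)^r * (iteratedDeriv (r+1) g s
          * RLintLeft a (((r+1:ℕ):ℝ) - α) (fun u => f u - f a) s)
        + iteratedDeriv (r+1) f s * RLintRight b (((r+1:ℕ):ℝ) - α) g s := by
      show (-1:ℝ)^r * iteratedDeriv (r+1) g s
          * RLintLeft a ((r:ℝ) + 1 - α) (fun u => f u - f a) s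
        + iteratedDeriv (r+1) f s * RLintRight b ((r:ℝ) + 1 - α) g s = _
      rw [show (((r+1:ℕ):ℝ) - α) = (r:ℝ) + 1 - α from by push_cast; ring]
      ring
    rw [hWe]
    calc |(-1:ℝ)^r * (iteratedDeriv (r+1) g s
          * RLintLeft a (((r+1:ℕ):ℝ) - α) (fun u => f u - f a) s)
        + iteratedDeriv (r+1) f s * RLintRight b (((r+1:ℕ):ℝ) - α) g s|
        ≤ |(-1:ℝ)^r * (iteratedDeriv (r+1) g s
            * RLintLeft a (((r+1:ℕ):ℝ) - α) (fun u => f u - f a) s)|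
          + |iteratedDeriv (r+1) f s * RLintRight b (((r+1:ℕ):ℝ) - α) g s| := abs_add_le _ _
      _ = |iteratedDeriv (r+1) g s
            * RLintLeft a (((r+1:ℕ):ℝ) - α) (fun u => f u - f a) s|
          + |iteratedDeriv (r+1) f s * RLintRight b (((r+1:ℕ):ℝ) - α) g s| := by
          rw [abs_mul, abs_pow, abs_neg, abs_one, one_pow, one_mul]
      _ < ε/2 + ε/2 := add_lt_add h1 h2
      _ = ε := by ring
  -- pointwise convergence of the partial sums
  have hpt : ∀ s ∈ Set.Ioo a b, Filter.Tendsto (fun N => ∑ r ∈ Finset.range N,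
      ((-1:ℝ)^r * iteratedDeriv r g s
          * RLintLeft a ((r:ℝ) + 1 - α) (fun u => f u - f a) s
        + iteratedDeriv r f s * RLintRight b ((r:ℝ) + 1 - α) g s)) Filter.atTop
      (nhds (∑' r : ℕ, ((-1:ℝ)^r * iteratedDeriv r g s
          * RLintLeft a ((r:ℝ) + 1 - α) (fun u => f u - f a) s
        + iteratedDeriv r f s * RLintRight b ((r:ℝ) + 1 - α) g s))) :=
    fun s hs => (hsum s hs).hasSum.tendsto_sum_nat
  have hkey : HasDerivAt (fun s => ∑' r : ℕ,
      ((-1:ℝ)^r * iteratedDeriv r g s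
          * RLintLeft a ((r:ℝ) + 1 - α) (fun u => f u - f a) s
        + iteratedDeriv r f s * RLintRight b ((r:ℝ) + 1 - α) g s))
      (TF.Dfun a b α f g t) t :=
    hasDerivAt_of_tendstoUniformlyOn isOpen_Ioo hunif
      (Filter.Eventually.of_forall hP) hpt ht
  rw [hkey.deriv]
  have hCap : caputoLeft a α f t
      = RLintLeft a (1 - α) (deriv (fun u => f u - f a)) t := by
    rw [caputoLeft, RLderivLeft]
    exact (TF.hasDeriv_left_low hα hFdiff hF'c hFa hta).deriv
  have hRd : RLderivRight b α g t
      = -(-((1 / Real.Gamma (1 - α)) * ((b - t) ^ (-α) * g b))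
          + RLintRight b (1 - α) (deriv g) t) := by
    rw [RLderivRight, (TF.hasDeriv_right_low hα hgd hg'c htb).deriv]
  rw [hCap, hRd, TF.Dfun]
  ring
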